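/- Let η_V > 0, η_S > 0, α ∈ [0,1], ρ < 0, μ < 0 with η_V ≠ η_S |ρ|. Define for x ∈ ℝ and y ≥ 0 the joint density p^C(x,y) = η_V e^{-η_V y} · ( α η_S e^{-η_S (x - μ - ρ y)} 1_{x - μ - ρ y ≥ 0} + (1-α) η_S e^{η_S (x - μ - ρ y)} 1_{x - μ - ρ y < 0} ). Let 0 < K < S₀ e^{μ}, and set k = log(K/S₀), so that k < μ < 0. Then ∫_{ℝ} ∫₀^∞ (K - S₀ e^x)^+ p^C(x,y) dy dx = c_{1L} · S₀ e^{(η_V/|ρ| + 1)k} / (η_V/|ρ| + 1) + c_{2L} · S₀ e^{(η_S + 1)k} / (η_S + 1), where c_{1L} = α (η_S |ρ| / (η_V + η_S |ρ|)) e^{-(η_V/|ρ|) μ} - (1-α) (η_S |ρ| / (η_V - η_S |ρ|)) e^{-(η_V/|ρ|) μ} and c_{2L} = (1-α) (η_V / (η_V - η_S |ρ|)) e^{-η_S μ}. -/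

import Mathlib

open MeasureTheory

/-- The joint density of the common jumps in the Kou-type model. -/
noncomputable def pC (ηV ηS α μ ρ : ℝ) (x y : ℝ) : ℝ :=
  ηV * Real.exp (-ηV * y) *
    (if 0 ≤ x - μ - ρ * y then α * (ηS * Real.exp (-ηS * (x - μ - ρ * y)))
     else (1 - α) * (ηS * Real.exp (ηS * (x - μ - ρ * y))))

/-!
For `x < μ` the inner integral splits at `y₀ = (x - μ) / ρ > 0`, where the argument
`x - μ - ρ y` of the Kou density changes sign. On each side `p^C(x, ·)` is a single exponential
in `y`, and the two pieces add up to a combination of `e^{(η_V/|ρ|)(x - μ)}` and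
`e^{η_S (x - μ)}`. Because `k < μ` the payoff `(K - S₀ e^x)^+` vanishes for `x ≥ μ`, so the outer
integral is a combination of `∫ (S₀ e^k - S₀ e^x)^+ e^{β x} dx = S₀ e^{(β+1)k} / (β (β + 1))`.
-/

open Set Real

theorem intervalIntegral_exp_mul {c : ℝ} (hc : c ≠ 0) (a b : ℝ) :
    ∫ x in a..b, exp (c * x) = (exp (c * b) - exp (c * a)) / c := by
  rw [intervalIntegral.integral_comp_mul_left (fun x => exp x) hc, integral_exp, smul_eq_mul,
    inv_mul_eq_div]

section JointDensity

variable {ηV ηS α μ ρ x y : ℝ}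

theorem pC_of_neg (h : x - μ - ρ * y < 0) :
    pC ηV ηS α μ ρ x y
      = (1 - α) * ηS * ηV * exp (ηS * (x - μ)) * exp (-(ηV - ηS * -ρ) * y) := by
  have hexp : exp (-ηV * y) * exp (ηS * (x - μ - ρ * y))
      = exp (ηS * (x - μ)) * exp (-(ηV - ηS * -ρ) * y) := by
    rw [← exp_add, ← exp_add]; ring_nf
  rw [pC, if_neg h.not_ge]
  linear_combination (1 - α) * ηS * ηV * hexp

theorem pC_of_nonneg (h : 0 ≤ x - μ - ρ * y) :
    pC ηV ηS α μ ρ x y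
      = α * ηS * ηV * exp (-(ηS * (x - μ))) * exp (-(ηV + ηS * -ρ) * y) := by
  have hexp : exp (-ηV * y) * exp (-ηS * (x - μ - ρ * y))
      = exp (-(ηS * (x - μ))) * exp (-(ηV + ηS * -ρ) * y) := by
    rw [← exp_add, ← exp_add]; ring_nf
  rw [pC, if_pos h]
  linear_combination α * ηS * ηV * hexp

end JointDensity

theorem integral_Ioi_eq_of_eqOn_exp_mul {f : ℝ → ℝ} {t c₁ c₂ d₁ d₂ : ℝ} (ht : 0 < t)
    (hd₁ : d₁ ≠ 0) (hd₂ : d₂ < 0) (hlow : EqOn f (fun y => c₁ * exp (d₁ * y)) (Ioo 0 t))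
    (hhigh : EqOn f (fun y => c₂ * exp (d₂ * y)) (Ici t)) :
    ∫ y in Ioi 0, f y = c₁ * ((exp (d₁ * t) - 1) / d₁) + c₂ * (-exp (d₂ * t) / d₂) := by
  have hint_low : IntegrableOn f (Ioo 0 t) :=
    (((continuous_const.mul (continuous_const.mul continuous_id).rexp).integrableOn_Icc
      (a := 0) (b := t)).mono_set Ioo_subset_Icc_self).congr_fun hlow.symm measurableSet_Ioo
  have hint_high : IntegrableOn f (Ici t) :=
    ((integrableOn_Ici_iff_integrableOn_Ioi).mpr
      ((integrableOn_exp_mul_Ioi hd₂ t).const_mul c₂)).congr_fun hhigh.symm measurableSet_Ici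
  have hdisj : Disjoint (Ioo 0 t) (Ici t) := (Iio_disjoint_Ici le_rfl).mono_left Ioo_subset_Iio_self
  rw [← Ioo_union_Ici_eq_Ioi ht, setIntegral_union hdisj measurableSet_Ici hint_low hint_high,
    setIntegral_congr_fun measurableSet_Ioo hlow,
    setIntegral_congr_fun measurableSet_Ici hhigh, integral_const_mul, integral_const_mul,
    ← integral_Ioc_eq_integral_Ioo, ← intervalIntegral.integral_of_le ht.le,
    intervalIntegral_exp_mul hd₁, integral_Ici_eq_integral_Ioi, integral_exp_mul_Ioi hd₂,
    mul_zero, exp_zero]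

theorem integral_pC_Ioi_of_lt {ηV ηS α μ ρ x : ℝ} (hηV : 0 < ηV) (hηS : 0 < ηS) (hρ : ρ < 0)
    (hne : ηV ≠ ηS * -ρ) (hx : x < μ) :
    ∫ y in Ioi 0, pC ηV ηS α μ ρ x y
      = (α * ηS * ηV / (ηV + ηS * -ρ) - (1 - α) * ηS * ηV / (ηV - ηS * -ρ))
          * exp (ηV / -ρ * (x - μ))
        + (1 - α) * ηS * ηV / (ηV - ηS * -ρ) * exp (ηS * (x - μ)) := by
  obtain ⟨y₀, hy₀⟩ : ∃ y₀, y₀ = (x - μ) / ρ := ⟨_, rfl⟩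
  have hsign : ∀ y, x - μ - ρ * y < 0 ↔ y < y₀ := fun y => by
    rw [hy₀, lt_div_iff_of_neg hρ]; constructor <;> intro <;> linarith
  have hd₁ : -(ηV - ηS * -ρ) ≠ 0 := neg_ne_zero.mpr (sub_ne_zero.mpr hne)
  have hd₂ : -(ηV + ηS * -ρ) < 0 := by nlinarith
  rw [integral_Ioi_eq_of_eqOn_exp_mul (hy₀ ▸ div_pos_of_neg_of_neg (by linarith) hρ) hd₁ hd₂
    (fun y hy => pC_of_neg ((hsign y).mpr hy.2))
    (fun y hy => pC_of_nonneg (not_lt.mp fun h => (mem_Ici.mp hy).not_gt ((hsign y).mp h)))]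
  have hρ0 : ρ ≠ 0 := hρ.ne
  have hlow : exp (ηS * (x - μ)) * exp (-(ηV - ηS * -ρ) * y₀) = exp (ηV / -ρ * (x - μ)) := by
    rw [← exp_add, hy₀]; congr 1; field_simp; ring
  have hhigh : exp (-(ηS * (x - μ))) * exp (-(ηV + ηS * -ρ) * y₀) = exp (ηV / -ρ * (x - μ)) := by
    rw [← exp_add, hy₀]; congr 1; field_simp; ring
  -- `ring` treats `(-d)⁻¹` and `d⁻¹` as unrelated atoms when `d` is a sum.
  simp only [div_neg, neg_div, neg_neg] at hlow hhigh ⊢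
  linear_combination α * ηS * ηV / (ηV + ηS * -ρ) * hhigh
    - (1 - α) * ηS * ηV / (ηV - ηS * -ρ) * hlow

section PutPayoff

variable {S₀ k β : ℝ}

theorem put_payoff_mul_exp_eq_indicator (hS₀ : 0 ≤ S₀) :
    (fun x => max (S₀ * exp k - S₀ * exp x) 0 * exp (β * x))
      = (Iic k).indicator (fun x => S₀ * exp k * exp (β * x) - S₀ * exp ((β + 1) * x)) := by
  funext x
  by_cases hx : x ≤ k
  · have hpos : 0 ≤ S₀ * exp k - S₀ * exp x :=
      sub_nonneg.mpr (mul_le_mul_of_nonneg_left (exp_le_exp.mpr hx) hS₀)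
    rw [indicator_of_mem (mem_Iic.mpr hx), max_eq_left hpos, add_mul, one_mul, exp_add]
    ring
  · have hneg : S₀ * exp k - S₀ * exp x ≤ 0 :=
      sub_nonpos.mpr (mul_le_mul_of_nonneg_left (exp_le_exp.mpr (not_le.mp hx).le) hS₀)
    rw [indicator_of_notMem (notMem_Iic.mpr (not_le.mp hx)), max_eq_right hneg, zero_mul]

theorem integrable_put_payoff_mul_exp (hS₀ : 0 ≤ S₀) (hβ : 0 < β) :
    Integrable (fun x => max (S₀ * exp k - S₀ * exp x) 0 * exp (β * x)) := by
  rw [put_payoff_mul_exp_eq_indicator hS₀, integrable_indicator_iff measurableSet_Iic]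
  exact ((integrableOn_exp_mul_Iic hβ k).const_mul _).sub
    ((integrableOn_exp_mul_Iic (by linarith) k).const_mul _)

theorem integral_put_payoff_mul_exp (hS₀ : 0 ≤ S₀) (hβ : 0 < β) :
    ∫ x, max (S₀ * exp k - S₀ * exp x) 0 * exp (β * x)
      = S₀ * exp ((β + 1) * k) / (β * (β + 1)) := by
  have hβ₁ : 0 < β + 1 := by linarith
  rw [put_payoff_mul_exp_eq_indicator hS₀, integral_indicator measurableSet_Iic,
    integral_sub ((integrableOn_exp_mul_Iic hβ k).const_mul _)
      ((integrableOn_exp_mul_Iic hβ₁ k).const_mul _),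
    integral_const_mul, integral_const_mul, integral_exp_mul_Iic hβ, integral_exp_mul_Iic hβ₁,
    add_mul, one_mul, exp_add]
  field_simp
  ring

end PutPayoff

theorem stmt_8_general (ηV ηS α μ ρ : ℝ) (hηV : 0 < ηV) (hηS : 0 < ηS)
    (hρ : ρ < 0) (hne : ηV ≠ ηS * |ρ|)
    (S₀ K : ℝ) (hK0 : 0 < K) (hK : K < S₀ * Real.exp μ)
    (k : ℝ) (hk : k = Real.log (K / S₀)) :
    ∫ x : ℝ, ∫ y in Set.Ioi (0 : ℝ), max (K - S₀ * Real.exp x) 0 * pC ηV ηS α μ ρ x y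
      = (α * (ηS * |ρ| / (ηV + ηS * |ρ|)) * Real.exp (-(ηV / |ρ|) * μ)
          - (1 - α) * (ηS * |ρ| / (ηV - ηS * |ρ|)) * Real.exp (-(ηV / |ρ|) * μ))
          * (S₀ * Real.exp ((ηV / |ρ| + 1) * k) / (ηV / |ρ| + 1))
        + ((1 - α) * (ηV / (ηV - ηS * |ρ|)) * Real.exp (-ηS * μ))
          * (S₀ * Real.exp ((ηS + 1) * k) / (ηS + 1)) := by
  rw [abs_of_neg hρ] at hne ⊢
  have hS₀ : 0 < S₀ := pos_of_mul_pos_left (hK0.trans hK) (exp_pos μ).le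
  have hK_eq : K = S₀ * exp k := by
    rw [hk, exp_log (div_pos hK0 hS₀), mul_div_cancel₀ _ hS₀.ne']
  have hkμ : k < μ := by
    rwa [hk, log_lt_iff_lt_exp (div_pos hK0 hS₀), div_lt_iff₀' hS₀]
  have ha : 0 < ηV / -ρ := div_pos hηV (neg_pos.mpr hρ)
  have hpointwise : ∀ x, ∫ y in Ioi 0, max (K - S₀ * exp x) 0 * pC ηV ηS α μ ρ x y
      = (α * ηS * ηV / (ηV + ηS * -ρ) - (1 - α) * ηS * ηV / (ηV - ηS * -ρ))
          * exp (-(ηV / -ρ) * μ) * (max (S₀ * exp k - S₀ * exp x) 0 * exp (ηV / -ρ * x))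
        + (1 - α) * ηS * ηV / (ηV - ηS * -ρ)
          * exp (-ηS * μ) * (max (S₀ * exp k - S₀ * exp x) 0 * exp (ηS * x)) := fun x => by
    rw [integral_const_mul, ← hK_eq]
    rcases lt_or_ge x μ with hx | hx
    · have hsplit : ∀ c, exp (c * (x - μ)) = exp (-c * μ) * exp (c * x) := fun c => by
        rw [← exp_add]; ring_nf
      rw [integral_pC_Ioi_of_lt hηV hηS hρ hne hx, hsplit, hsplit]
      ring
    · have hpayoff : K - S₀ * exp x ≤ 0 := by
        rw [hK_eq, sub_nonpos]
        exact mul_le_mul_of_nonneg_left (exp_le_exp.mpr (hkμ.le.trans hx)) hS₀.le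
      rw [max_eq_right hpayoff]
      ring
  simp only [hpointwise]
  rw [integral_add ((integrable_put_payoff_mul_exp hS₀.le ha).const_mul _)
      ((integrable_put_payoff_mul_exp hS₀.le hηS).const_mul _),
    integral_const_mul, integral_const_mul, integral_put_payoff_mul_exp hS₀.le ha,
    integral_put_payoff_mul_exp hS₀.le hηS]
  have hρ0 : ρ ≠ 0 := hρ.ne
  have he : ηV + ηS * -ρ ≠ 0 := by nlinarith
  have hd : ηV - ηS * -ρ ≠ 0 := sub_ne_zero.mpr hne
  field_simp
  ring

/-- Short-maturity deep-OTM European put coefficient from common jumps in the Kou-type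
model, for `k = log(K/S₀) < μ < 0`:
`∫_ℝ ∫₀^∞ (K - S₀ e^x)^+ p^C(x,y) dy dx
  = c_{1L} S₀ e^{(η_V/|ρ| + 1)k}/(η_V/|ρ| + 1) + c_{2L} S₀ e^{(η_S + 1)k}/(η_S + 1)`. -/
theorem stmt_8 (ηV ηS α μ ρ : ℝ) (hηV : 0 < ηV) (hηS : 0 < ηS)
    (hα : α ∈ Set.Icc (0 : ℝ) 1) (hρ : ρ < 0) (hμ : μ < 0) (hne : ηV ≠ ηS * |ρ|)
    (S₀ K : ℝ) (hK0 : 0 < K) (hK : K < S₀ * Real.exp μ)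
    (k : ℝ) (hk : k = Real.log (K / S₀)) :
    ∫ x : ℝ, ∫ y in Set.Ioi (0 : ℝ), max (K - S₀ * Real.exp x) 0 * pC ηV ηS α μ ρ x y
      = (α * (ηS * |ρ| / (ηV + ηS * |ρ|)) * Real.exp (-(ηV / |ρ|) * μ)
          - (1 - α) * (ηS * |ρ| / (ηV - ηS * |ρ|)) * Real.exp (-(ηV / |ρ|) * μ))
          * (S₀ * Real.exp ((ηV / |ρ| + 1) * k) / (ηV / |ρ| + 1))
        + ((1 - α) * (ηV / (ηV - ηS * |ρ|)) * Real.exp (-ηS * μ))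
          * (S₀ * Real.exp ((ηS + 1) * k) / (ηS + 1)) :=
  stmt_8_general ηV ηS α μ ρ hηV hηS hρ hne S₀ K hK0 hK k hk
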